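/- Let q ≥ 8 be an even prime power and μ ∈ F_q^* with μ ≠ 1. Then the number of c ∈ F_q^* such that the cubic t³ + ct² + t + μc has exactly one root in F_q equals the number of c ∈ F_q^* such that Tr( (1 + μc⁴)/(c²(μ+1)²) + μ/(μ+1) ) = 1. -/

import Mathlib

/-!
The shift `t = x + c` turns `t³ + ct² + t + μc` into the depressed cubic `x³ + ax + b` with
`a = c² + 1`, `b = c(μ + 1) ≠ 0`, and the trace argument of the statement differs from
`a³/b² + 1` by `v² + v` with `v = a/(μ + 1)`, whose trace vanishes. So everything reduces to the
classical criterion: over `F_q`, `q` even, `x³ + ax + b` has exactly one root iff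
`Tr(a³/b² + 1) = 1`.

If `r` is a root, the cubic is `(x + r)(x² + rx + r² + a)`, and `a³/b² + 1` differs from
`(r² + a)/r²` by `w² + w` with `w = r²/(r² + a)`; by Artin–Schreier the quadratic factor has a
root iff `Tr((r² + a)/r²) = 0`. If there is no root, the cubic is irreducible, and in its splitting
field `F_{q³}` it has the distinct roots `r` and `r^q`, so the trace over `F_{q³}` vanishes; as
`[F_{q³} : F_q] = 3` is odd, that trace restricts to the trace of `F_q`.
-/

open Polynomial

namespace FiniteField

section Frobenius

variable {F L : Type*} [Field F] [Fintype F] [Field L] [Algebra F L]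

theorem exists_isRoot_of_pow_card_eq_self {f : F[X]} (hf : f ≠ 0) {x : L} (hx : aeval x f = 0)
    (hxq : x ^ Fintype.card F = x) : ∃ y : F, f.IsRoot y := by
  have hint : IsIntegral F x := isAlgebraic_iff_isIntegral.mp ⟨f, hf, hx⟩
  have hdvd : minpoly F x ∣ X ^ Fintype.card F - X := minpoly.dvd F x (by simp [hxq])
  have hsplits : (X ^ Fintype.card F - X : F[X]).Splits := by
    simpa using (isSplittingField_sub F F).splits
  obtain ⟨y, hy⟩ := (hsplits.of_dvd (X_pow_card_sub_X_ne_zero F Fintype.one_lt_card) hdvd)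
    |>.exists_eval_eq_zero (minpoly.degree_pos hint).ne'
  exact ⟨y, eval_eq_zero_of_dvd_of_eval_eq_zero (minpoly.dvd F x hx) hy⟩

theorem aeval_pow_card_eq_zero {f : F[X]} {x : L} (hx : aeval x f = 0) :
    aeval (x ^ Fintype.card F) f = 0 := by
  simpa [hx] using aeval_algHom_apply (frobeniusAlgHom F L) x f

theorem _root_.AdjoinRoot.root_pow_card_ne_root {f : F[X]} [Fact (Irreducible f)]
    (hf : f.natDegree ≠ 1) : AdjoinRoot.root f ^ Fintype.card F ≠ AdjoinRoot.root f := by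
  intro hq
  have hirr : Irreducible f := Fact.out
  obtain ⟨y, hy⟩ := exists_isRoot_of_pow_card_eq_self hirr.ne_zero
    (by rw [AdjoinRoot.aeval_eq, AdjoinRoot.mk_self]) hq
  exact hirr.not_isRoot_of_natDegree_ne_one hf hy

end Frobenius

theorem trace_algebraMap_of_odd_finrank {F L : Type*} [Field F] [Finite F] [Field L]
    [Algebra (ZMod 2) F] [Algebra (ZMod 2) L] [Algebra F L] [IsScalarTower (ZMod 2) F L]
    [FiniteDimensional F L] (h : Odd (Module.finrank F L)) (x : F) :
    Algebra.trace (ZMod 2) L (algebraMap F L x) = Algebra.trace (ZMod 2) F x := by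
  have : Module.Finite (ZMod 2) F := .of_finite
  rw [← Algebra.trace_trace (S := F), Algebra.trace_algebraMap, map_nsmul, nsmul_eq_mul,
    ZMod.natCast_eq_one_iff_odd.mpr h, one_mul]

section ArtinSchreier

variable {K : Type*} [Field K] [Finite K] [Algebra (ZMod 2) K]

theorem trace_sq (x : K) : Algebra.trace (ZMod 2) K (x ^ 2) = Algebra.trace (ZMod 2) K x := by
  simpa [coe_frobeniusAlgEquivOfAlgebraic, ZMod.card] using
    Algebra.trace_eq_of_algEquiv (frobeniusAlgEquivOfAlgebraic (ZMod 2) K) x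

theorem trace_sq_add_self (y : K) : Algebra.trace (ZMod 2) K (y ^ 2 + y) = 0 := by
  rw [map_add, trace_sq, CharTwo.add_self_eq_zero]

variable [CharP K 2]

theorem exists_sq_add_self_eq_iff_trace_eq_zero (w : K) :
    (∃ y : K, y ^ 2 + y = w) ↔ Algebra.trace (ZMod 2) K w = 0 := by
  let ψ : K →ₗ[ZMod 2] K := (frobeniusAlgHom (ZMod 2) K).toLinearMap + LinearMap.id
  have hψ (y : K) : ψ y = y ^ 2 + y := by simp [ψ, ZMod.card]
  have hker : LinearMap.ker ψ = (ZMod 2) ∙ (1 : K) := by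
    ext y
    rw [LinearMap.mem_ker, Submodule.mem_span_singleton]
    constructor
    · intro hy
      rcases mul_eq_zero.mp (show y * (y + 1) = 0 by grind) with h | h
      · exact ⟨0, by rw [h, zero_smul]⟩
      · exact ⟨1, by rw [one_smul, CharTwo.add_eq_zero.mp h]⟩
    · rintro ⟨a, rfl⟩
      rw [map_smul, hψ, one_pow, CharTwo.add_self_eq_zero, smul_zero]
  have hrange : LinearMap.range ψ = LinearMap.ker (Algebra.trace (ZMod 2) K) := by
    refine Submodule.eq_of_le_of_finrank_le ?_ ?_
    · rintro _ ⟨y, rfl⟩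
      rw [LinearMap.mem_ker, hψ, trace_sq_add_self]
    · have hψrank := ψ.finrank_range_add_finrank_ker
      have hTrank := (Algebra.trace (ZMod 2) K).finrank_range_add_finrank_ker
      rw [hker, finrank_span_singleton one_ne_zero] at hψrank
      rw [LinearMap.range_eq_top.mpr (Algebra.trace_surjective _ _), finrank_top,
        Module.finrank_self] at hTrank
      omega
  simpa [hψ] using SetLike.ext_iff.mp hrange w

theorem exists_sq_add_mul_add_eq_zero_iff {r : K} (hr : r ≠ 0) (s : K) :
    (∃ x : K, x ^ 2 + r * x + s = 0) ↔ Algebra.trace (ZMod 2) K (s / r ^ 2) = 0 := by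
  rw [← exists_sq_add_self_eq_iff_trace_eq_zero]
  constructor
  · rintro ⟨x, hx⟩
    exact ⟨x / r, by field_simp; grind⟩
  · rintro ⟨y, hy⟩
    refine ⟨r * y, ?_⟩
    field_simp at hy
    grind

end ArtinSchreier

section Cubic

theorem cubic_eq_mul_of_root {R : Type*} [CommRing R] [CharP R 2] {a b r : R}
    (hr : r ^ 3 + a * r + b = 0) (x : R) :
    x ^ 3 + a * x + b = (x + r) * (x ^ 2 + r * x + (r ^ 2 + a)) := by
  grind

variable {F : Type*} [Field F] [Finite F] [CharP F 2]

theorem ncard_cubic_roots_eq_one_iff_of_root {a b r : F} (hb : b ≠ 0)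
    (hr : r ^ 3 + a * r + b = 0) :
    {x : F | x ^ 3 + a * x + b = 0}.ncard = 1 ↔ ∀ x : F, x ^ 2 + r * x + (r ^ 2 + a) ≠ 0 := by
  have hroots : {x : F | x ^ 3 + a * x + b = 0}
      = insert r {x | x ^ 2 + r * x + (r ^ 2 + a) = 0} := by
    ext x
    simp [cubic_eq_mul_of_root hr, CharTwo.add_eq_zero]
  have hr' : r ∉ {x : F | x ^ 2 + r * x + (r ^ 2 + a) = 0} := by
    intro h
    apply hb
    grind
  rw [hroots, Set.ncard_insert_of_notMem hr', add_eq_right, Set.ncard_eq_zero,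
    Set.eq_empty_iff_forall_notMem]
  rfl

variable [Algebra (ZMod 2) F]

theorem trace_cubic_eq_of_root {a b r : F} (hb : b ≠ 0) (hr : r ^ 3 + a * r + b = 0) :
    Algebra.trace (ZMod 2) F (a ^ 3 / b ^ 2 + 1)
      = Algebra.trace (ZMod 2) F ((r ^ 2 + a) / r ^ 2) := by
  obtain rfl : b = r * (r ^ 2 + a) := by grind
  have hr0 : r ≠ 0 := left_ne_zero_of_mul hb
  have hs : r ^ 2 + a ≠ 0 := right_ne_zero_of_mul hb
  have key : a ^ 3 / (r * (r ^ 2 + a)) ^ 2 + 1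
      = (r ^ 2 + a) / r ^ 2 + ((r ^ 2 / (r ^ 2 + a)) ^ 2 + r ^ 2 / (r ^ 2 + a)) := by
    field_simp
    grind
  rw [key, map_add, trace_sq_add_self, add_zero]

theorem trace_cubic_eq_zero_of_root_ne {a b r r' : F} (hb : b ≠ 0)
    (hr : r ^ 3 + a * r + b = 0) (hr' : r' ^ 3 + a * r' + b = 0) (hne : r' ≠ r) :
    Algebra.trace (ZMod 2) F (a ^ 3 / b ^ 2 + 1) = 0 := by
  have hr0 : r ≠ 0 := by
    rintro rfl
    exact hb (by simpa using hr)
  have hquad : r' ^ 2 + r * r' + (r ^ 2 + a) = 0 := by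
    rw [cubic_eq_mul_of_root hr] at hr'
    exact (mul_eq_zero.mp hr').resolve_left fun h ↦ hne (CharTwo.add_eq_zero.mp h)
  rw [trace_cubic_eq_of_root hb hr, ← exists_sq_add_mul_add_eq_zero_iff hr0]
  exact ⟨r', hquad⟩

theorem trace_cubic_eq_zero_of_forall_ne_zero {a b : F} (hb : b ≠ 0)
    (h : ∀ x : F, x ^ 3 + a * x + b ≠ 0) : Algebra.trace (ZMod 2) F (a ^ 3 / b ^ 2 + 1) = 0 := by
  have := Fintype.ofFinite F
  let f : F[X] := X ^ 3 + C a * X + C b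
  have hmon : f.Monic := by unfold f; monicity!
  have hdeg : f.natDegree = 3 := by unfold f; compute_degree!
  have hirr : Irreducible f := by
    rw [hmon.irreducible_iff_roots_eq_zero_of_degree_le_three (by omega) (by omega),
      Multiset.eq_zero_iff_forall_notMem]
    intro x hx
    exact h x (by simpa [f] using (mem_roots hmon.ne_zero).mp hx)
  have : Fact (Irreducible f) := ⟨hirr⟩
  let K := AdjoinRoot f
  have : Module.Finite F K := (AdjoinRoot.powerBasis hmon.ne_zero).finite
  have : Finite K := Module.finite_of_finite F
  have : CharP K 2 := charP_of_injective_algebraMap' F 2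
  have hK : Module.finrank F K = 3 := (AdjoinRoot.powerBasis hmon.ne_zero).finrank.trans hdeg
  have hroot {x : K} (hx : aeval x f = 0) :
      x ^ 3 + algebraMap F K a * x + algebraMap F K b = 0 := by
    simpa [f] using hx
  have hr : aeval (AdjoinRoot.root f) f = 0 := by rw [AdjoinRoot.aeval_eq, AdjoinRoot.mk_self]
  have htrace := trace_cubic_eq_zero_of_root_ne (by simpa using hb) (hroot hr)
    (hroot (aeval_pow_card_eq_zero hr)) (AdjoinRoot.root_pow_card_ne_root (by omega))
  rw [← trace_algebraMap_of_odd_finrank (L := K) (by rw [hK]; decide)]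
  simpa using htrace

theorem ncard_cubic_roots_eq_one_iff {a b : F} (hb : b ≠ 0) :
    {x : F | x ^ 3 + a * x + b = 0}.ncard = 1 ↔
      Algebra.trace (ZMod 2) F (a ^ 3 / b ^ 2 + 1) = 1 := by
  by_cases h : ∃ r : F, r ^ 3 + a * r + b = 0
  · obtain ⟨r, hr⟩ := h
    have hr0 : r ≠ 0 := by
      rintro rfl
      exact hb (by simpa using hr)
    rw [ncard_cubic_roots_eq_one_iff_of_root hb hr, trace_cubic_eq_of_root hb hr, ← not_exists,
      exists_sq_add_mul_add_eq_zero_iff hr0]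
    exact (by decide : ∀ z : ZMod 2, ¬z = 0 ↔ z = 1) _
  · push Not at h
    have hempty : {x : F | x ^ 3 + a * x + b = 0} = ∅ := Set.eq_empty_of_forall_notMem h
    rw [hempty, Set.ncard_empty, trace_cubic_eq_zero_of_forall_ne_zero hb h]
    decide

end Cubic

end FiniteField

open FiniteField in
theorem ncard_roots_eq_one_iff_trace {F : Type*} [Field F] [Finite F] [CharP F 2]
    [Algebra (ZMod 2) F] {μ c : F} (hμ : μ ≠ 1) (hc : c ≠ 0) :
    {t : F | t ^ 3 + c * t ^ 2 + t + μ * c = 0}.ncard = 1 ↔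
      Algebra.trace (ZMod 2) F ((1 + μ * c ^ 4) / (c ^ 2 * (μ + 1) ^ 2) + μ / (μ + 1)) = 1 := by
  have hμ' : μ + 1 ≠ 0 := fun h ↦ hμ (CharTwo.add_eq_zero.mp h)
  have hshift : {t : F | t ^ 3 + c * t ^ 2 + t + μ * c = 0}
      = (· + c) ⁻¹' {x | x ^ 3 + (c ^ 2 + 1) * x + c * (μ + 1) = 0} := by
    ext t
    grind
  have htrace : (1 + μ * c ^ 4) / (c ^ 2 * (μ + 1) ^ 2) + μ / (μ + 1)
      = ((c ^ 2 + 1) ^ 3 / (c * (μ + 1)) ^ 2 + 1)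
        + (((c ^ 2 + 1) / (μ + 1)) ^ 2 + (c ^ 2 + 1) / (μ + 1)) := by
    field_simp
    grind
  rw [htrace, map_add, trace_sq_add_self, add_zero, hshift,
    Set.ncard_preimage_of_injective_subset_range (add_left_injective c)
      fun x _ ↦ ⟨x - c, sub_add_cancel x c⟩,
    ncard_cubic_roots_eq_one_iff (mul_ne_zero hc hμ')]

theorem stmt13 (n : ℕ) (μ : GaloisField 2 n) (hμ1 : μ ≠ 1) :
    Set.ncard {c : GaloisField 2 n | c ≠ 0 ∧
        ({t : GaloisField 2 n | t ^ 3 + c * t ^ 2 + t + μ * c = 0} :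
          Set (GaloisField 2 n)).ncard = 1}
      = Set.ncard {c : GaloisField 2 n | c ≠ 0 ∧
          Algebra.trace (ZMod 2) (GaloisField 2 n)
            ((1 + μ * c ^ 4) / (c ^ 2 * (μ + 1) ^ 2) + μ / (μ + 1)) = 1} := by
  congr 1
  ext c
  exact and_congr_right fun hc ↦ ncard_roots_eq_one_iff_trace hμ1 hc
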